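/- arXiv:1104.0122 — 2 statements merged into one kernel-verified Lean document; each statement's English description precedes it below -/
import Mathlib

section
/- For every configuration P with P ≠ {(0,0)}, setting ρ := s/α, one has α ≤ e^(−ρ+1). -/
open MeasureTheory Set
open scoped Classical

noncomputable section

/-- The cake: the unit square `[0,1]²`. -/
def unitSq : Set (ℝ × ℝ) := Set.Icc ((0, 0) : ℝ × ℝ) ((1, 1) : ℝ × ℝ)

/-- A configuration: a finite point set in the unit square containing the origin. -/
def IsConfig (P : Finset (ℝ × ℝ)) : Prop := ((0, 0) : ℝ × ℝ) ∈ P ∧ ↑P ⊆ unitSq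

/-- Area of the closed axis-parallel rectangle with lower left corner `a` and
upper right corner `b`. -/
def rectArea (a b : ℝ × ℝ) : ℝ := (volume (Set.Icc a b)).toReal

/-- A Bob family for `P`, encoded by assigning to each point `p ∈ P` the upper
right corner `q p` of the closed axis-parallel rectangle placed with lower left
corner `p` (a degenerate rectangle `q p = p` encodes an unused point); the
rectangles lie in the unit square and have pairwise disjoint interiors, and
distinct rectangles automatically have distinct lower left corners. -/
def IsBobFamily (P : Finset (ℝ × ℝ)) (q : ℝ × ℝ → ℝ × ℝ) : Prop :=
  (∀ p ∈ P, p ≤ q p) ∧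
  (∀ p ∈ P, Set.Icc p (q p) ⊆ unitSq) ∧
  (∀ p ∈ P, ∀ p' ∈ P, p ≠ p' →
    interior (Set.Icc p (q p)) ∩ interior (Set.Icc p' (q p')) = ∅)

/-- The total area of a Bob family. -/
def famArea (P : Finset (ℝ × ℝ)) (q : ℝ × ℝ → ℝ × ℝ) : ℝ :=
  ∑ p ∈ P, rectArea p (q p)

/-- `bob(P)`: the supremum of the total area over all Bob families for `P`. -/
def bobP (P : Finset (ℝ × ℝ)) : ℝ :=
  sSup { a : ℝ | ∃ q : ℝ × ℝ → ℝ × ℝ, IsBobFamily P q ∧ a = famArea P q }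

/-- `bob(n)`: the infimum of `bob(P)` over all configurations with `n` points. -/
def bobN (n : ℕ) : ℝ :=
  sInf { a : ℝ | ∃ P : Finset (ℝ × ℝ), IsConfig P ∧ P.card = n ∧ a = bobP P }

/-- `n(r)`: the least `n ≥ 1` with `bob(n) ≤ 1/r`, or `∞` if there is none. -/
def nOf (r : ℝ) : ℕ∞ :=
  sInf { N : ℕ∞ | ∃ n : ℕ, N = (n : ℕ∞) ∧ 1 ≤ n ∧ bobN n ≤ 1 / r }

/-- `stairs(P)`: the union of all closed axis-parallel rectangles in the unit
square with lower left corner `(0,0)` whose interior contains no point of `P`. -/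
def stairs (P : Finset (ℝ × ℝ)) : Set (ℝ × ℝ) :=
  ⋃ b ∈ { b : ℝ × ℝ | b ∈ unitSq ∧ ∀ p ∈ P, p ∉ interior (Set.Icc ((0, 0) : ℝ × ℝ) b) },
    Set.Icc ((0, 0) : ℝ × ℝ) b

/-- `s`: the area of `stairs(P)`. -/
def stairsArea (P : Finset (ℝ × ℝ)) : ℝ := (volume (stairs P)).toReal

/-- `α`: the supremum of areas of axis-parallel rectangles contained in `stairs(P)`. -/
def alphaOf (P : Finset (ℝ × ℝ)) : ℝ :=
  sSup { a : ℝ | ∃ c d : ℝ × ℝ, c ≤ d ∧ Set.Icc c d ⊆ stairs P ∧ a = rectArea c d }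

/-- `ρ := s/α`. -/
def rhoOf (P : Finset (ℝ × ℝ)) : ℝ := stairsArea P / alphaOf P

/-- `a` is a minimum of `S`: no other point of `S` is (weakly) dominated-below it. -/
def IsMinOf (S : Set (ℝ × ℝ)) (a : ℝ × ℝ) : Prop :=
  a ∈ S ∧ ∀ b ∈ S, b ≠ a → ¬(b.1 ≤ a.1 ∧ b.2 ≤ a.2)

/-- `p 0, …, p (k-1)` enumerates the minima of `P \ {(0,0)}` in order of
strictly decreasing `y`-coordinate. -/
def EnumMinima (P : Finset (ℝ × ℝ)) (k : ℕ) (p : Fin k → ℝ × ℝ) : Prop :=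
  (∀ i : Fin k, IsMinOf ((↑P : Set (ℝ × ℝ)) \ {((0, 0) : ℝ × ℝ)}) (p i)) ∧
  (∀ q : ℝ × ℝ, IsMinOf ((↑P : Set (ℝ × ℝ)) \ {((0, 0) : ℝ × ℝ)}) q → ∃ i : Fin k, p i = q) ∧
  (∀ i j : Fin k, i < j → (p j).2 < (p i).2)

/-- The sequence `y₀ = 1`, `yᵢ = y(pᵢ)` (with the paper's `pᵢ` being `p (i-1)` here). -/
def YSeq (k : ℕ) (p : Fin k → ℝ × ℝ) (y : ℕ → ℝ) : Prop :=
  y 0 = 1 ∧ ∀ i : Fin k, y (i.1 + 1) = (p i).2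

/-- The rectangle `Bᵢ = [x(pᵢ), 1] × [yᵢ, y_{i-1}]` (0-indexed here). -/
def rectB (k : ℕ) (p : Fin k → ℝ × ℝ) (y : ℕ → ℝ) (i : Fin k) : Set (ℝ × ℝ) :=
  Set.Icc (((p i).1, y (i.1 + 1)) : ℝ × ℝ) ((1, y i.1) : ℝ × ℝ)

/-- `βᵢ`: the area of `Bᵢ`. -/
def betaOf (k : ℕ) (p : Fin k → ℝ × ℝ) (y : ℕ → ℝ) (i : Fin k) : ℝ :=
  (volume (rectB k p y i)).toReal

/-- The affine map sending the rectangle with corners `a ≤ b` onto `[0,1]²`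
(with `a ↦ (0,0)`). -/
def rectMap (a b : ℝ × ℝ) (q : ℝ × ℝ) : ℝ × ℝ :=
  ((q.1 - a.1) / (b.1 - a.1), (q.2 - a.2) / (b.2 - a.2))

/-- `Pᵢ`: the image of `P ∩ Bᵢ` under the affine map sending `Bᵢ` onto `[0,1]²`. -/
def subConfig (P : Finset (ℝ × ℝ)) (k : ℕ) (p : Fin k → ℝ × ℝ) (y : ℕ → ℝ)
    (i : Fin k) : Finset (ℝ × ℝ) :=
  (P.filter (fun q => q ∈ rectB k p y i)).image
    (rectMap (((p i).1, y (i.1 + 1)) : ℝ × ℝ) ((1, y i.1) : ℝ × ℝ))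


/-! The stairs lie under the hyperbola `xy = α`, because every point `q` of `stairs P` spans the
rectangle `[0, q]` inside `stairs P`. The part of the unit square under that hyperbola has area
`α + ∫_α^1 α/x dx = α (1 - log α)`, so `s ≤ α (1 - log α)`, i.e. `ρ ≤ 1 - log α`. -/

lemma volume_Icc_prod (a b : ℝ × ℝ) :
    volume (Icc a b) = ENNReal.ofReal (b.1 - a.1) * ENNReal.ofReal (b.2 - a.2) := by
  rw [Icc_prod_eq, Measure.volume_eq_prod, Measure.prod_prod, Real.volume_Icc, Real.volume_Icc]

lemma volume_unitSq : volume unitSq = 1 := by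
  simp [unitSq, volume_Icc_prod]

lemma prod_volume_region_between_zero_cc {α : Type*} [MeasurableSpace α] {μ : Measure α}
    [SFinite μ] {s : Set α} (hs : MeasurableSet s) {g : α → ℝ} (hg : Measurable g) :
    μ.prod volume {p : α × ℝ | p.1 ∈ s ∧ p.2 ∈ Icc 0 (g p.1)} =
      ∫⁻ x in s, ENNReal.ofReal (g x) ∂μ := by
  have hslice : ∀ x, volume (Prod.mk x ⁻¹' {p : α × ℝ | p.1 ∈ s ∧ p.2 ∈ Icc 0 (g p.1)}) =
      s.indicator (fun x => ENNReal.ofReal (g x)) x := by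
    intro x
    by_cases hx : x ∈ s
    · simp only [preimage, mem_ofPred_eq, hx, true_and, ofPred_mem_eq, indicator_of_mem]
      rw [Real.volume_Icc, sub_zero]
    · simp [hx]
  rw [Measure.prod_apply (measurableSet_region_between_cc measurable_const hg hs)]
  simp only [hslice, lintegral_indicator hs]

lemma setLIntegral_Ioc_const_div {a b c : ℝ} (ha : 0 < a) (hab : a ≤ b) (hc : 0 ≤ c) :
    ∫⁻ x in Ioc a b, ENNReal.ofReal (c / x) = ENNReal.ofReal (c * Real.log (b / a)) := by
  have hpos : ∀ x ∈ Icc a b, 0 < x := fun x hx => ha.trans_le hx.1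
  have hint : IntegrableOn (fun x => c / x) (Ioc a b) :=
    (ContinuousOn.integrableOn_Icc (continuousOn_const.div continuousOn_id
      fun x hx => (hpos x hx).ne')).mono_set Ioc_subset_Icc_self
  rw [← ofReal_integral_eq_lintegral_ofReal hint
      ((ae_restrict_iff' measurableSet_Ioc).2 (.of_forall fun x hx =>
        div_nonneg hc (hpos x (Ioc_subset_Icc_self hx)).le)),
    ← intervalIntegral.integral_of_le hab]
  simp only [div_eq_mul_inv c, intervalIntegral.integral_const_mul,
    integral_inv_of_pos ha (ha.trans_le hab)]

lemma volume_unitSq_inter_mul_le (a : ℝ) (ha : 0 < a) (ha1 : a ≤ 1) :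
    volume {q ∈ unitSq | q.1 * q.2 ≤ a} ≤ ENNReal.ofReal (a * (1 - Real.log a)) := by
  have hcover : {q ∈ unitSq | q.1 * q.2 ≤ a} ⊆
      {p : ℝ × ℝ | p.1 ∈ Icc 0 a ∧ p.2 ∈ Icc 0 ((fun _ => 1) p.1)} ∪
        {p : ℝ × ℝ | p.1 ∈ Ioc a 1 ∧ p.2 ∈ Icc 0 ((fun x => a / x) p.1)} := by
    rintro ⟨x, y⟩ ⟨⟨⟨hx0, hy0⟩, ⟨hx1, hy1⟩⟩, hxy⟩
    dsimp only at *
    rcases le_or_gt x a with hxa | hax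
    · exact Or.inl ⟨⟨hx0, hxa⟩, hy0, hy1⟩
    · exact Or.inr ⟨⟨hax, hx1⟩, hy0, by rw [le_div_iff₀ (ha.trans hax)]; linarith⟩
  have hlog : 0 ≤ a * Real.log (1 / a) :=
    mul_nonneg ha.le (Real.log_nonneg (one_le_one_div ha ha1))
  calc volume {q ∈ unitSq | q.1 * q.2 ≤ a}
      ≤ ENNReal.ofReal a + ENNReal.ofReal (a * Real.log (1 / a)) := by
        refine (measure_mono hcover).trans ((measure_union_le _ _).trans_eq ?_)
        rw [Measure.volume_eq_prod,
          prod_volume_region_between_zero_cc measurableSet_Icc measurable_const,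
          prod_volume_region_between_zero_cc (g := fun x => a / x) measurableSet_Ioc (by fun_prop),
          setLIntegral_Ioc_const_div ha ha1 ha.le]
        simp [Real.volume_Icc]
    _ = ENNReal.ofReal (a * (1 - Real.log a)) := by
        rw [← ENNReal.ofReal_add ha.le hlog, one_div, Real.log_inv]
        ring_nf

lemma rectArea_origin {q : ℝ × ℝ} (hq : (0, 0) ≤ q) : rectArea (0, 0) q = q.1 * q.2 := by
  rw [rectArea, volume_Icc_prod, sub_zero, sub_zero, ← ENNReal.ofReal_mul hq.1,
    ENNReal.toReal_ofReal (mul_nonneg hq.1 hq.2)]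

lemma rectArea_le_one {c d : ℝ × ℝ} (h : Icc c d ⊆ unitSq) : rectArea c d ≤ 1 :=
  ENNReal.toReal_le_of_le_ofReal zero_le_one <| by
    simpa [volume_unitSq] using measure_mono (μ := volume) h

lemma stairs_subset_unitSq (P : Finset (ℝ × ℝ)) : stairs P ⊆ unitSq :=
  iUnion₂_subset fun _ hb => Icc_subset_Icc_right hb.1.2

lemma Icc_origin_subset_stairs {P : Finset (ℝ × ℝ)} {q : ℝ × ℝ} (hq : q ∈ stairs P) :
    Icc (0, 0) q ⊆ stairs P := by
  obtain ⟨b, hb, hqb⟩ := mem_iUnion₂.1 hq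
  exact (Icc_subset_Icc_right hqb.2).trans (subset_biUnion_of_mem (u := fun b => Icc (0, 0) b) hb)

lemma origin_mem_stairs (P : Finset (ℝ × ℝ)) : ((0, 0) : ℝ × ℝ) ∈ stairs P :=
  mem_biUnion ⟨⟨le_rfl, by simp [Prod.le_def]⟩, fun p _ => by simp⟩ (left_mem_Icc.2 le_rfl)

section alphaOf

variable (P : Finset (ℝ × ℝ))

lemma bddAbove_rectAreas_subset_stairs :
    BddAbove {a : ℝ | ∃ c d : ℝ × ℝ, c ≤ d ∧ Icc c d ⊆ stairs P ∧ a = rectArea c d} :=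
  ⟨1, by
    rintro _ ⟨c, d, -, hcd, rfl⟩
    exact rectArea_le_one (hcd.trans (stairs_subset_unitSq P))⟩

lemma mul_le_alphaOf_of_mem_stairs {q : ℝ × ℝ} (hq : q ∈ stairs P) : q.1 * q.2 ≤ alphaOf P := by
  have h0q : ((0, 0) : ℝ × ℝ) ≤ q := (stairs_subset_unitSq P hq).1
  rw [← rectArea_origin h0q]
  exact le_csSup (bddAbove_rectAreas_subset_stairs P) ⟨_, _, h0q, Icc_origin_subset_stairs hq, rfl⟩

lemma zero_mem_rectAreas_subset_stairs :
    (0 : ℝ) ∈ {a : ℝ | ∃ c d : ℝ × ℝ, c ≤ d ∧ Icc c d ⊆ stairs P ∧ a = rectArea c d} :=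
  ⟨(0, 0), (0, 0), le_rfl, by simpa using origin_mem_stairs P, by simp [rectArea_origin]⟩

lemma alphaOf_nonneg : 0 ≤ alphaOf P :=
  le_csSup (bddAbove_rectAreas_subset_stairs P) (zero_mem_rectAreas_subset_stairs P)

lemma alphaOf_le_one : alphaOf P ≤ 1 := by
  refine csSup_le ⟨0, zero_mem_rectAreas_subset_stairs P⟩ ?_
  rintro _ ⟨c, d, -, hcd, rfl⟩
  exact rectArea_le_one (hcd.trans (stairs_subset_unitSq P))

lemma stairsArea_le (hα : 0 < alphaOf P) :
    stairsArea P ≤ alphaOf P * (1 - Real.log (alphaOf P)) := by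
  have hsub : stairs P ⊆ {q ∈ unitSq | q.1 * q.2 ≤ alphaOf P} :=
    fun q hq => ⟨stairs_subset_unitSq P hq, mul_le_alphaOf_of_mem_stairs P hq⟩
  have hlog := Real.log_nonpos hα.le (alphaOf_le_one P)
  exact ENNReal.toReal_le_of_le_ofReal (mul_nonneg hα.le (by linarith))
    ((measure_mono hsub).trans (volume_unitSq_inter_mul_le _ hα (alphaOf_le_one P)))

end alphaOf

lemma le_exp_neg_div_add_one {a s : ℝ} (ha : 0 < a) (hs : s ≤ a * (1 - Real.log a)) :
    a ≤ Real.exp (-(s / a) + 1) := by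
  rw [← Real.log_le_iff_le_exp ha]
  have : s / a ≤ 1 - Real.log a := (div_le_iff₀' ha).2 hs
  linarith

/-- With `ρ := s/α`, one has `α ≤ e^(−ρ+1)`. -/
theorem statement6 :
    ∀ P : Finset (ℝ × ℝ), IsConfig P → P ≠ {((0, 0) : ℝ × ℝ)} →
      alphaOf P ≤ Real.exp (-(rhoOf P) + 1) := by
  intro P _ _
  rcases (alphaOf_nonneg P).eq_or_lt with hα | hα
  · -- `α = 0` forces `ρ = s / 0 = 0` under Lean's division convention.
    rw [rhoOf, ← hα, div_zero, neg_zero, zero_add]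
    exact (Real.exp_pos 1).le
  · exact le_exp_neg_div_add_one hα (stairsArea_le P hα)
end
end

section
/- For every configuration P, the supremum bob(P) is attained: there exists a Bob family for P whose total area equals bob(P). -/
open MeasureTheory Set
open scoped Classical

noncomputable section

lemma interior_Icc_prod (a b : ℝ × ℝ) :
    interior (Set.Icc a b) = Set.Ioo a.1 b.1 ×ˢ Set.Ioo a.2 b.2 := by
  rw [Set.Icc_prod_eq, interior_prod_eq, interior_Icc, interior_Icc]

lemma rectArea_eq (a b : ℝ × ℝ) :
    rectArea a b = max (b.1 - a.1) 0 * max (b.2 - a.2) 0 := by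
  rw [rectArea, Set.Icc_prod_eq, Measure.volume_eq_prod, Measure.prod_prod,
    Real.volume_Icc, Real.volume_Icc, ENNReal.toReal_mul,
    ENNReal.toReal_ofReal', ENNReal.toReal_ofReal']

lemma disj_iff (a b c d : ℝ × ℝ) :
    interior (Set.Icc a b) ∩ interior (Set.Icc c d) = ∅ ↔
      (min b.1 d.1 ≤ max a.1 c.1 ∨ min b.2 d.2 ≤ max a.2 c.2) := by
  rw [interior_Icc_prod, interior_Icc_prod, Set.prod_inter_prod,
    Set.prod_eq_empty_iff, Set.Ioo_inter_Ioo, Set.Ioo_inter_Ioo,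
    Set.Ioo_eq_empty_iff, Set.Ioo_eq_empty_iff, not_lt, not_lt]


/-- The supremum `bob(P)` is attained by some Bob family. -/
theorem statement16 :
    ∀ P : Finset (ℝ × ℝ), IsConfig P →
      ∃ q : ℝ × ℝ → ℝ × ℝ, IsBobFamily P q ∧ famArea P q = bobP P := by
  intro P hP
  obtain ⟨h0P, hPsub⟩ := hP
  -- the feasible set (normalized: zero off P, with a closed reformulation)
  set F : Set (ℝ × ℝ → ℝ × ℝ) :=
    {q | ∀ p ∈ P, p ≤ q p} ∩ {q | ∀ p ∈ P, q p ∈ unitSq} ∩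
    {q | ∀ p ∈ P, ∀ p' ∈ P, p ≠ p' →
      (min (q p).1 (q p').1 ≤ max p.1 p'.1 ∨ min (q p).2 (q p').2 ≤ max p.2 p'.2)} ∩
    {q | ∀ x, x ∉ P → q x = ((0, 0) : ℝ × ℝ)} with hFdef
  have hmemF : ∀ q, q ∈ F ↔ ((∀ p ∈ P, p ≤ q p) ∧ (∀ p ∈ P, q p ∈ unitSq) ∧
      (∀ p ∈ P, ∀ p' ∈ P, p ≠ p' →
        (min (q p).1 (q p').1 ≤ max p.1 p'.1 ∨ min (q p).2 (q p').2 ≤ max p.2 p'.2)) ∧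
      (∀ x, x ∉ P → q x = ((0, 0) : ℝ × ℝ))) := by
    intro q
    simp only [hFdef, Set.mem_inter_iff, Set.mem_setOf_eq]
    tauto
  -- F members are Bob families
  have hFbob : ∀ q ∈ F, IsBobFamily P q := by
    intro q hq
    obtain ⟨h1, h2, h3, -⟩ := (hmemF q).1 hq
    refine ⟨h1, ?_, ?_⟩
    · intro p hp
      have hpu := hPsub hp
      exact Set.Icc_subset_Icc hpu.1 (h2 p hp).2
    · intro p hp p' hp' hne
      exact (disj_iff p (q p) p' (q p')).2 (h3 p hp p' hp' hne)
  -- F is closed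
  have hFclosed : IsClosed F := by
    refine IsClosed.inter (IsClosed.inter (IsClosed.inter ?_ ?_) ?_) ?_
    · have : {q : ℝ × ℝ → ℝ × ℝ | ∀ p ∈ P, p ≤ q p} = ⋂ p ∈ P, {q | p ≤ q p} := by
        ext; simp
      rw [this]
      exact isClosed_biInter fun p _ => IsClosed.preimage (continuous_apply p) isClosed_Ici
    · have : {q : ℝ × ℝ → ℝ × ℝ | ∀ p ∈ P, q p ∈ unitSq} = ⋂ p ∈ P, {q | q p ∈ unitSq} := by
        ext; simp
      rw [this]
      exact isClosed_biInter fun p _ =>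
        IsClosed.preimage (continuous_apply p) isClosed_Icc
    · have : {q : ℝ × ℝ → ℝ × ℝ | ∀ p ∈ P, ∀ p' ∈ P, p ≠ p' →
          (min (q p).1 (q p').1 ≤ max p.1 p'.1 ∨ min (q p).2 (q p').2 ≤ max p.2 p'.2)}
          = ⋂ p ∈ P, ⋂ p' ∈ P, {q | p ≠ p' →
          (min (q p).1 (q p').1 ≤ max p.1 p'.1 ∨ min (q p).2 (q p').2 ≤ max p.2 p'.2)} := by
        ext; simp
      rw [this]
      refine isClosed_biInter fun p _ => isClosed_biInter fun p' _ => ?_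
      by_cases hpe : p = p'
      · simp [hpe]
      · have : {q : ℝ × ℝ → ℝ × ℝ | p ≠ p' →
            (min (q p).1 (q p').1 ≤ max p.1 p'.1 ∨ min (q p).2 (q p').2 ≤ max p.2 p'.2)}
            = {q | min (q p).1 (q p').1 ≤ max p.1 p'.1} ∪
              {q | min (q p).2 (q p').2 ≤ max p.2 p'.2} := by
          ext q; simp [hpe]
        rw [this]
        refine IsClosed.union ?_ ?_
        · exact isClosed_le (((continuous_apply p).fst).min ((continuous_apply p').fst))
            continuous_const
        · exact isClosed_le (((continuous_apply p).snd).min ((continuous_apply p').snd))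
            continuous_const
    · have : {q : ℝ × ℝ → ℝ × ℝ | ∀ x, x ∉ P → q x = ((0,0) : ℝ × ℝ)}
          = ⋂ x ∈ ({x | x ∉ P} : Set (ℝ × ℝ)), {q | q x = ((0,0) : ℝ × ℝ)} := by
        ext; simp
      rw [this]
      exact isClosed_biInter fun x _ =>
        IsClosed.preimage (continuous_apply x) isClosed_singleton
  -- F is compact
  have hFcomp : IsCompact F := by
    have hK : IsCompact (Set.pi Set.univ
        (fun x : ℝ × ℝ => if x ∈ P then unitSq else {((0,0) : ℝ × ℝ)})) := by
      refine isCompact_univ_pi fun x => ?_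
      split_ifs
      · exact isCompact_Icc
      · exact isCompact_singleton
    refine hK.of_isClosed_subset hFclosed ?_
    intro q hq x _
    obtain ⟨-, h2, -, h4⟩ := (hmemF q).1 hq
    by_cases hx : x ∈ P
    · simpa [hx] using h2 x hx
    · simpa [hx] using h4 x hx
  -- F is nonempty
  have hFne : F.Nonempty := by
    refine ⟨fun x => if x ∈ P then x else ((0,0) : ℝ × ℝ), (hmemF _).2 ?_⟩
    refine ⟨fun p hp => by simp [hp], fun p hp => by simpa [hp] using hPsub hp,
      fun p hp p' hp' _ => ?_, fun x hx => by simp [hx]⟩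
    simp only [hp, hp', if_pos]
    exact Or.inl min_le_max
  -- famArea is continuous
  have hcont : Continuous (famArea P) := by
    unfold famArea
    refine continuous_finset_sum _ fun p _ => ?_
    simp only [rectArea_eq]
    exact ((((continuous_apply p).fst).sub continuous_const).max continuous_const).mul
      ((((continuous_apply p).snd).sub continuous_const).max continuous_const)
  -- attain the max
  obtain ⟨qs, hqsF, hmax⟩ := hFcomp.exists_isMaxOn hFne hcont.continuousOn
  refine ⟨qs, hFbob qs hqsF, ?_⟩
  have hgr : IsGreatest { a : ℝ | ∃ q : ℝ × ℝ → ℝ × ℝ, IsBobFamily P q ∧ a = famArea P q }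
      (famArea P qs) := by
    constructor
    · exact ⟨qs, hFbob qs hqsF, rfl⟩
    · rintro a ⟨q, ⟨hq1, hq2, hq3⟩, rfl⟩
      set q' : ℝ × ℝ → ℝ × ℝ := fun x => if x ∈ P then q x else ((0,0) : ℝ × ℝ) with hq'
      have heq : famArea P q = famArea P q' :=
        Finset.sum_congr rfl fun p hp => by simp [hq', hp]
      have hq'F : q' ∈ F := by
        refine (hmemF q').2 ⟨fun p hp => by simpa [hq', hp] using hq1 p hp,
          fun p hp => ?_, fun p hp p' hp' hne => ?_, fun x hx => by simp [hq', hx]⟩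
        · have : q p ∈ Set.Icc p (q p) := Set.right_mem_Icc.2 (hq1 p hp)
          simpa [hq', hp] using hq2 p hp this
        · have := (disj_iff p (q p) p' (q p')).1 (hq3 p hp p' hp' hne)
          simpa [hq', hp, hp'] using this
      rw [heq]
      exact hmax hq'F
  rw [bobP]
  exact hgr.csSup_eq.symm
end
end
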